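/- As formal power series, 1 + ∑_{m ≥ 1} q^{m(m+1)/2} / ((q;q)_{m-1}² (1-q^m)) = 1 + ((q;q)_∞)^{-1} ∑_{m ≥ 0} q^{(2m+1)(m+1)} / (q²;q²)_m. -/

import Mathlib

open PowerSeries

/-- The q-Pochhammer symbol `(q;q)_m = ∏_{j=1}^m (1 - q^j)`. -/
noncomputable def qPoch (m : ℕ) : PowerSeries ℚ :=
  ∏ j ∈ Finset.range m, (1 - PowerSeries.X ^ (j + 1))

/-- The q-Pochhammer symbol `(q²;q²)_m = ∏_{j=1}^m (1 - q^{2j})`. -/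
noncomputable def qPoch2 (m : ℕ) : PowerSeries ℚ :=
  ∏ j ∈ Finset.range m, (1 - PowerSeries.X ^ (2 * (j + 1)))

/-- The infinite product `(q;q)_∞`, defined coefficientwise. -/
noncomputable def qPochInf : PowerSeries ℚ :=
  PowerSeries.mk fun n => PowerSeries.coeff n (qPoch (n + 1))

/-- The formal sum `∑_{m ≥ 0} F m` of a family of power series in which the `m`-th
term has order at least `m`, defined coefficientwise. -/
noncomputable def formalSum (F : ℕ → PowerSeries ℚ) : PowerSeries ℚ :=
  PowerSeries.mk fun n => ∑ m ∈ Finset.range (n + 1), PowerSeries.coeff n (F m)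

/-!
Multiply both sides by `(q;q)_∞`. Since `(q;q)_∞ / (q;q)_{m+1} = ∏_{i > m+1} (1 - q^i)`, Euler's
expansion of this product turns the term `q^{C(m+2,2)} / ((q;q)_m (q;q)_{m+1})` on the left into
`∑_j (-1)^j q^{C(m+j+2,2)} / ((q;q)_m (q;q)_j)`. Collecting the terms with `m + j = s` leaves
`q^{C(s+2,2)} ∑_{i+j=s} (-1)^j / ((q;q)_i (q;q)_j)`; by Gauss this inner sum vanishes for odd `s`
and equals `1 / (q²;q²)_n` for `s = 2n`, and `C(2n+2,2) = (2n+1)(n+1)`.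

Euler's identity comes from the recurrence `E_a = (1 - q^{a+1}) E_{a+1}` shared by
`∏_{i > a} (1 - q^i)` and its series; Gauss's from `c_{s+2} (1 - q^{s+2}) = c_s` for the
convolution `c` of `1 / (q;q)_k` with `(-1)^k / (q;q)_k`. All formal sums have `X ^ m ∣ F m`, so
each coefficient is a finite sum.
-/

open Finset

theorem Nat.choose_two_add (a b : ℕ) : (a + b).choose 2 = a.choose 2 + b.choose 2 + a * b := by
  induction b with
  | zero => simp
  | succ b ih => simp only [← add_assoc, Nat.choose_succ_succ', Nat.choose_one_right, ih]; ring

theorem Nat.le_choose_two_add_two (n : ℕ) : n ≤ (n + 2).choose 2 := by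
  rw [Nat.choose_succ_succ', Nat.choose_one_right]
  omega

theorem Finset.sum_range_two_mul {M : Type*} [AddCommMonoid M] (f : ℕ → M) (k : ℕ) :
    ∑ m ∈ range (2 * k), f m = ∑ n ∈ range k, (f (2 * n) + f (2 * n + 1)) := by
  induction k with
  | zero => simp
  | succ k ih =>
    rw [mul_add, mul_one, sum_range_succ, sum_range_succ, sum_range_succ, ih, add_assoc]

theorem PowerSeries.coeff_eq_of_X_pow_dvd_sub {R : Type*} [CommRing R] {f g : R⟦X⟧} {n i : ℕ}
    (h : X ^ n ∣ f - g) (hi : i < n) : coeff i f = coeff i g := by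
  rw [← sub_eq_zero, ← map_sub]
  exact X_pow_dvd_iff.1 h i hi

section FormalSum

variable {F : ℕ → ℚ⟦X⟧}

theorem coeff_formalSum (hF : ∀ m, X ^ m ∣ F m) {i N : ℕ} (hi : i < N) :
    coeff i (formalSum F) = ∑ m ∈ range N, coeff i (F m) := by
  rw [formalSum, coeff_mk]
  refine sum_subset (range_subset_range.2 hi) fun m _ hm => X_pow_dvd_iff.1 (hF m) i ?_
  simpa using hm

theorem formalSum_sub (G : ℕ → ℚ⟦X⟧) :
    formalSum (fun m => F m - G m) = formalSum F - formalSum G := by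
  ext i
  simp [formalSum, sum_sub_distrib]

theorem X_pow_dvd_formalSum {k : ℕ} (h : ∀ m, X ^ k ∣ F m) : X ^ k ∣ formalSum F := by
  refine X_pow_dvd_iff.2 fun i hi => ?_
  rw [formalSum, coeff_mk]
  exact sum_eq_zero fun m _ => X_pow_dvd_iff.1 (h m) i hi

theorem formalSum_eq_add_formalSum_succ (hF : ∀ m, X ^ m ∣ F m) :
    formalSum F = F 0 + formalSum (fun m => F (m + 1)) := by
  ext i
  rw [map_add, coeff_formalSum hF (Nat.lt_succ_of_lt i.lt_succ_self), sum_range_succ', add_comm,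
    formalSum, coeff_mk]

theorem mul_formalSum (hF : ∀ m, X ^ m ∣ F m) (f : ℚ⟦X⟧) :
    f * formalSum F = formalSum (fun m => f * F m) := by
  ext n
  have hcoeff : ∀ p ∈ antidiagonal n,
      coeff p.2 (formalSum F) = ∑ m ∈ range (n + 1), coeff p.2 (F m) := fun p hp =>
    coeff_formalSum hF (by have := mem_antidiagonal.1 hp; omega)
  rw [coeff_mul, sum_congr rfl fun p hp => by rw [hcoeff p hp], formalSum, coeff_mk]
  simp_rw [mul_sum, coeff_mul]
  exact sum_comm

theorem formalSum_formalSum {T : ℕ → ℕ → ℚ⟦X⟧} (hT : ∀ m j, X ^ (m + j) ∣ T m j) :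
    formalSum (fun m => formalSum (T m)) =
      formalSum (fun s => ∑ p ∈ antidiagonal s, T p.1 p.2) := by
  ext n
  have hinner : ∀ m ∈ range (n + 1), ∑ j ∈ range (n + 1), coeff n (T m j) =
      ∑ j ∈ range (n + 1 - m), coeff n (T m j) := fun m _ =>
    (sum_subset (range_subset_range.2 (Nat.sub_le _ _)) fun j _ hj =>
      X_pow_dvd_iff.1 (hT m j) n (by simp at hj; omega)).symm
  simp only [formalSum, coeff_mk]
  rw [sum_congr rfl hinner, ← sum_range_diag_flip]
  simp_rw [map_sum, Nat.sum_antidiagonal_eq_sum_range_succ_mk]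

theorem formalSum_eq_formalSum_two_mul (hF : ∀ m, X ^ m ∣ F m)
    (hodd : ∀ n, F (2 * n + 1) = 0) : formalSum F = formalSum (fun n => F (2 * n)) := by
  ext i
  rw [coeff_formalSum hF (by omega : i < 2 * (i + 1)), sum_range_two_mul, formalSum, coeff_mk]
  simp [hodd]

end FormalSum

theorem constantCoeff_one_sub_X_pow {k : ℕ} (hk : k ≠ 0) :
    constantCoeff (1 - X ^ k : ℚ⟦X⟧) = 1 := by
  simp [zero_pow hk]

theorem qPoch_zero : qPoch 0 = 1 := prod_range_zero _

theorem qPoch_succ (m : ℕ) : qPoch (m + 1) = qPoch m * (1 - X ^ (m + 1)) := prod_range_succ _ _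

theorem qPoch2_succ (m : ℕ) : qPoch2 (m + 1) = qPoch2 m * (1 - X ^ (2 * (m + 1))) :=
  prod_range_succ _ _

theorem constantCoeff_qPoch (m : ℕ) : constantCoeff (qPoch m) = 1 := by
  simp [qPoch]

theorem constantCoeff_qPoch2 (m : ℕ) : constantCoeff (qPoch2 m) = 1 := by
  simp [qPoch2]

theorem constantCoeff_qPochInf : constantCoeff qPochInf = 1 := by
  rw [← coeff_zero_eq_constantCoeff_apply, qPochInf, coeff_mk, coeff_zero_eq_constantCoeff_apply,
    constantCoeff_qPoch]

theorem inv_qPoch_succ (m : ℕ) : (qPoch (m + 1))⁻¹ = (1 - X ^ (m + 1))⁻¹ * (qPoch m)⁻¹ := by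
  rw [qPoch_succ, PowerSeries.mul_inv_rev]

theorem inv_qPoch_succ_mul (m : ℕ) : (qPoch (m + 1))⁻¹ * (1 - X ^ (m + 1)) = (qPoch m)⁻¹ := by
  rw [inv_qPoch_succ, mul_right_comm, PowerSeries.inv_mul_cancel _ (by
    rw [constantCoeff_one_sub_X_pow m.succ_ne_zero]; exact one_ne_zero), one_mul]

theorem X_pow_succ_dvd_qPoch_sub {M N : ℕ} (h : M ≤ N) : X ^ (M + 1) ∣ qPoch N - qPoch M := by
  induction N, h using Nat.le_induction with
  | base => simp
  | succ N hMN ih =>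
    have hsucc : qPoch (N + 1) - qPoch M = (qPoch N - qPoch M) - X ^ (N + 1) * qPoch N := by
      rw [qPoch_succ]; ring
    rw [hsucc]
    exact dvd_sub ih ((pow_dvd_pow X (by omega)).mul_right _)

theorem coeff_qPochInf {i b : ℕ} (h : i ≤ b) : coeff i qPochInf = coeff i (qPoch b) := by
  rw [qPochInf, coeff_mk]
  rcases le_total (i + 1) b with hb | hb
  · exact (coeff_eq_of_X_pow_dvd_sub (X_pow_succ_dvd_qPoch_sub hb) (by omega)).symm
  · exact coeff_eq_of_X_pow_dvd_sub (X_pow_succ_dvd_qPoch_sub hb) (by omega)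

/-- `eulerSeries a` is Euler's expansion of `∏_{i > a} (1 - q^i)`, see `qPoch_mul_eulerSeries`. -/
noncomputable def eulerTerm (a j : ℕ) : ℚ⟦X⟧ :=
  (-1) ^ j * X ^ ((a + 1) * j + j.choose 2) * (qPoch j)⁻¹

noncomputable def eulerSeries (a : ℕ) : ℚ⟦X⟧ := formalSum (eulerTerm a)

theorem eulerTerm_zero (a : ℕ) : eulerTerm a 0 = 1 := by
  simp [eulerTerm, qPoch_zero]

theorem X_pow_dvd_eulerTerm (a j : ℕ) : X ^ j ∣ eulerTerm a j :=
  (dvd_mul_of_dvd_right (pow_dvd_pow X (by nlinarith)) _).mul_right _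

theorem eulerTerm_succ (a j : ℕ) :
    eulerTerm a (j + 1) = eulerTerm (a + 1) (j + 1) - X ^ (a + 1) * eulerTerm (a + 1) j := by
  have hexp : (a + 1 + 1) * (j + 1) + (j + 1).choose 2 =
      (a + 1) * (j + 1) + (j + 1).choose 2 + (j + 1) := by ring
  have hX : X ^ (a + 1) * X ^ ((a + 1 + 1) * j + j.choose 2) =
      (X : ℚ⟦X⟧) ^ ((a + 1) * (j + 1) + (j + 1).choose 2) := by
    rw [← pow_add, Nat.choose_succ_succ', Nat.choose_one_right]; ring
  simp only [eulerTerm]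
  rw [hexp, pow_add X _ (j + 1)]
  linear_combination (-1) ^ (j + 1) * X ^ ((a + 1) * (j + 1) + (j + 1).choose 2) *
    inv_qPoch_succ_mul j + (-1) ^ j * (qPoch j)⁻¹ * hX

theorem eulerSeries_eq (a : ℕ) : eulerSeries a = (1 - X ^ (a + 1)) * eulerSeries (a + 1) := by
  have hdiff : eulerSeries (a + 1) - eulerSeries a = X ^ (a + 1) * eulerSeries (a + 1) := by
    rw [eulerSeries, eulerSeries, ← formalSum_sub, formalSum_eq_add_formalSum_succ
      fun j => dvd_sub (X_pow_dvd_eulerTerm _ j) (X_pow_dvd_eulerTerm _ j)]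
    simp only [eulerTerm_zero, sub_self, eulerTerm_succ a, sub_sub_cancel, zero_add]
    exact (mul_formalSum (X_pow_dvd_eulerTerm _) _).symm
  linear_combination -hdiff

theorem X_pow_succ_dvd_eulerSeries_sub_one (a : ℕ) : X ^ (a + 1) ∣ eulerSeries a - 1 := by
  rw [eulerSeries, formalSum_eq_add_formalSum_succ (X_pow_dvd_eulerTerm a), eulerTerm_zero,
    add_sub_cancel_left]
  exact X_pow_dvd_formalSum fun j =>
    (dvd_mul_of_dvd_right (pow_dvd_pow X (by nlinarith)) _).mul_right _

theorem qPoch_mul_eulerSeries (a : ℕ) : qPoch a * eulerSeries a = qPochInf := by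
  have hshift : ∀ N, qPoch a * eulerSeries a = qPoch (a + N) * eulerSeries (a + N) := by
    intro N
    induction N with
    | zero => rfl
    | succ N ih => rw [ih, eulerSeries_eq, ← add_assoc, qPoch_succ]; ring
  ext i
  have hclose : X ^ (a + i + 1) ∣ qPoch (a + i) * eulerSeries (a + i) - qPoch (a + i) := by
    simpa [mul_sub] using (X_pow_succ_dvd_eulerSeries_sub_one (a + i)).mul_left (qPoch (a + i))
  rw [hshift i, coeff_eq_of_X_pow_dvd_sub hclose (by omega), coeff_qPochInf (b := a + i) (by omega)]

section Convolution

variable {A : Type*} [CommRing A] {x : A} {u v : ℕ → A}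

theorem sum_antidiagonal_succ_sub_sum_pow_mul (hu : ∀ k, u (k + 1) * (1 - x ^ (k + 1)) = u k)
    (s : ℕ) :
    ∑ p ∈ antidiagonal (s + 1), u p.1 * v p.2 -
        ∑ p ∈ antidiagonal (s + 1), x ^ p.1 * u p.1 * v p.2 =
      ∑ p ∈ antidiagonal s, u p.1 * v p.2 := by
  rw [← sum_sub_distrib, Nat.sum_antidiagonal_succ]
  simp only [pow_zero, one_mul, sub_self, zero_add]
  refine sum_congr rfl fun p _ => ?_
  rw [← hu p.1]
  ring

theorem pow_mul_sum_antidiagonal_succ_sub_sum_pow_mul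
    (hv : ∀ k, v (k + 1) * (1 - x ^ (k + 1)) = -v k) (s : ℕ) :
    x ^ (s + 1) * ∑ p ∈ antidiagonal (s + 1), u p.1 * v p.2 -
        ∑ p ∈ antidiagonal (s + 1), x ^ p.1 * u p.1 * v p.2 =
      ∑ p ∈ antidiagonal s, x ^ p.1 * u p.1 * v p.2 := by
  rw [mul_sum, ← sum_sub_distrib, Nat.sum_antidiagonal_succ']
  simp only [mul_assoc, sub_self, zero_add]
  refine sum_congr rfl fun p hp => ?_
  rw [← mem_antidiagonal.1 hp, add_assoc, pow_add, ← neg_neg (v p.2), ← hv p.2]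
  ring

theorem sum_antidiagonal_add_two_mul_one_sub_pow
    (hu : ∀ k, u (k + 1) * (1 - x ^ (k + 1)) = u k)
    (hv : ∀ k, v (k + 1) * (1 - x ^ (k + 1)) = -v k) (s : ℕ) :
    (∑ p ∈ antidiagonal (s + 2), u p.1 * v p.2) * (1 - x ^ (s + 2)) =
      ∑ p ∈ antidiagonal s, u p.1 * v p.2 := by
  linear_combination sum_antidiagonal_succ_sub_sum_pow_mul hu (v := v) (s + 1) -
    pow_mul_sum_antidiagonal_succ_sub_sum_pow_mul (u := u) hv (s + 1) +
    sum_antidiagonal_succ_sub_sum_pow_mul hu (v := v) s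

end Convolution

noncomputable def qGaussSum (s : ℕ) : ℚ⟦X⟧ :=
  ∑ p ∈ antidiagonal s, (qPoch p.1)⁻¹ * ((-1) ^ p.2 * (qPoch p.2)⁻¹)

theorem qGaussSum_add_two_mul (s : ℕ) : qGaussSum (s + 2) * (1 - X ^ (s + 2)) = qGaussSum s :=
  sum_antidiagonal_add_two_mul_one_sub_pow (u := fun k => (qPoch k)⁻¹)
    (v := fun k => (-1) ^ k * (qPoch k)⁻¹) inv_qPoch_succ_mul
    (fun k => by rw [mul_assoc, inv_qPoch_succ_mul, pow_succ]; ring) s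

theorem qGaussSum_two_mul_add_one (n : ℕ) : qGaussSum (2 * n + 1) = 0 := by
  induction n with
  | zero => simp [qGaussSum, Nat.sum_antidiagonal_succ, qPoch_zero]
  | succ n ih =>
    have hrec := qGaussSum_add_two_mul (2 * n + 1)
    rw [ih] at hrec
    refine (mul_eq_zero.1 hrec).resolve_right fun h => ?_
    simpa [zero_pow] using congrArg constantCoeff h

theorem qGaussSum_two_mul_mul_qPoch2 (n : ℕ) : qGaussSum (2 * n) * qPoch2 n = 1 := by
  induction n with
  | zero => simp [qGaussSum, qPoch2, qPoch_zero]
  | succ n ih =>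
    rw [qPoch2_succ, show 2 * (n + 1) = 2 * n + 2 from rfl, ← mul_assoc,
      mul_right_comm, qGaussSum_add_two_mul, ih]

theorem qGaussSum_two_mul (n : ℕ) : qGaussSum (2 * n) = (qPoch2 n)⁻¹ :=
  (PowerSeries.eq_inv_iff_mul_eq_one (by rw [constantCoeff_qPoch2]; exact one_ne_zero)).2
    (qGaussSum_two_mul_mul_qPoch2 n)

noncomputable def stackTerm (m : ℕ) : ℚ⟦X⟧ :=
  X ^ ((m + 2).choose 2) * ((qPoch m)⁻¹ * (qPoch (m + 1))⁻¹)

theorem qPochInf_mul_stackTerm (m : ℕ) :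
    qPochInf * stackTerm m =
      formalSum (fun j =>
        X ^ ((m + j + 2).choose 2) * ((qPoch m)⁻¹ * ((-1) ^ j * (qPoch j)⁻¹))) := by
  have hcancel := PowerSeries.mul_inv_cancel (qPoch (m + 1))
    (by rw [constantCoeff_qPoch]; exact one_ne_zero)
  rw [stackTerm, ← qPoch_mul_eulerSeries (m + 1),
    show qPoch (m + 1) * eulerSeries (m + 1) * (X ^ ((m + 2).choose 2) * ((qPoch m)⁻¹ *
      (qPoch (m + 1))⁻¹)) = X ^ ((m + 2).choose 2) * (qPoch m)⁻¹ * eulerSeries (m + 1) by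
      linear_combination X ^ ((m + 2).choose 2) * (qPoch m)⁻¹ * eulerSeries (m + 1) * hcancel,
    eulerSeries, mul_formalSum (X_pow_dvd_eulerTerm _)]
  congr 1
  funext j
  have hexp : (m + j + 2).choose 2 = (m + 2).choose 2 + ((m + 1 + 1) * j + j.choose 2) := by
    rw [show m + j + 2 = m + 2 + j by ring, Nat.choose_two_add]; ring
  rw [eulerTerm, hexp, pow_add]
  ring

theorem sum_antidiagonal_eq_X_pow_mul_qGaussSum (s : ℕ) :
    ∑ p ∈ antidiagonal s, X ^ ((p.1 + p.2 + 2).choose 2) *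
      ((qPoch p.1)⁻¹ * ((-1) ^ p.2 * (qPoch p.2)⁻¹)) = X ^ ((s + 2).choose 2) * qGaussSum s := by
  rw [qGaussSum, mul_sum]
  exact sum_congr rfl fun p hp => by rw [mem_antidiagonal.1 hp]

theorem qPochInf_mul_formalSum_stackTerm :
    qPochInf * formalSum stackTerm =
      formalSum (fun n => X ^ ((2 * n + 2).choose 2) * (qPoch2 n)⁻¹) := by
  have hdvd {n : ℕ} (k : ℕ) (h : n ≤ k) (f : ℚ⟦X⟧) : X ^ n ∣ X ^ k * f :=
    (pow_dvd_pow X h).mul_right f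
  rw [mul_formalSum (F := stackTerm) fun m => hdvd _ (Nat.le_choose_two_add_two m) _]
  simp_rw [qPochInf_mul_stackTerm]
  rw [formalSum_formalSum fun m j => hdvd _ (Nat.le_choose_two_add_two (m + j)) _]
  simp_rw [sum_antidiagonal_eq_X_pow_mul_qGaussSum]
  rw [formalSum_eq_formalSum_two_mul (fun s => hdvd _ (Nat.le_choose_two_add_two s) _)
    fun n => by rw [qGaussSum_two_mul_add_one, mul_zero]]
  simp_rw [qGaussSum_two_mul]

/-- `1 + ∑_{m ≥ 1} q^{m(m+1)/2}/((q;q)_{m-1}²(1-q^m))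
      = 1 + ((q;q)_∞)⁻¹ ∑_{m ≥ 0} q^{(2m+1)(m+1)}/(q²;q²)_m`
(the left sum over `m ≥ 1` is reindexed by `m = k + 1`). -/
theorem shiftedStack_genFn_eulerian :
    1 + formalSum
        (fun k => X ^ ((k + 1) * (k + 2) / 2) * ((qPoch k)⁻¹) ^ 2 * (1 - X ^ (k + 1))⁻¹) =
      1 + qPochInf⁻¹ * formalSum (fun m => X ^ ((2 * m + 1) * (m + 1)) * (qPoch2 m)⁻¹) := by
  have hL (k : ℕ) : X ^ ((k + 1) * (k + 2) / 2) * ((qPoch k)⁻¹) ^ 2 * (1 - X ^ (k + 1))⁻¹ =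
      stackTerm k := by
    rw [stackTerm, inv_qPoch_succ, Nat.choose_two_right, show k + 2 - 1 = k + 1 by omega,
      mul_comm (k + 2)]
    ring
  have hR (n : ℕ) : (2 * n + 1) * (n + 1) = (2 * n + 2).choose 2 := by
    rw [Nat.choose_two_right, show (2 * n + 2) * (2 * n + 2 - 1) = (2 * n + 1) * (n + 1) * 2 by
      rw [show 2 * n + 2 - 1 = 2 * n + 1 by omega]; ring, Nat.mul_div_cancel _ two_pos]
  simp_rw [hL, hR]
  rw [← qPochInf_mul_formalSum_stackTerm, ← mul_assoc, PowerSeries.inv_mul_cancel _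
    (by rw [constantCoeff_qPochInf]; exact one_ne_zero), one_mul]
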